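/- The variable-restricted substitution-of-equals axiom, x = y → (φ(x/z) → φ(y/z)), is valid in the non-standard semantics, for variables x, y, z of the same type. -/
import Mathlib


/-- The two sorts (types) of the two-sorted term-modal language. -/
inductive TMSort : Type
  | agt | obj
deriving DecidableEq

/-- A signature for the two-sorted term-modal language. -/
structure Sig where
  Var : Type
  Con : Type
  Fn : Type
  Rel : Type
  varSort : Var → TMSort
  conSort : Con → TMSort
  deqVar : DecidableEq Var

attribute [instance] Sig.deqVar

/-- Terms: variables, constants, function applications. -/
inductive Tm (S : Sig) : Type
  | var (x : S.Var)
  | con (c : S.Con)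
  | app (f : S.Fn) (ts : List (Tm S))

/-- Formulas of term-modal logic. -/
inductive Fm (S : Sig) : Type
  | rel (P : S.Rel) (ts : List (Tm S))
  | eq (t s : Tm S)
  | neg (φ : Fm S)
  | and (φ ψ : Fm S)
  | all (x : S.Var) (φ : Fm S)
  | know (t : Tm S) (φ : Fm S)

variable {S : Sig}

/-- Substitution of variable `y` for variable `x` in a term. -/
def Tm.substT (y x : S.Var) : Tm S → Tm S
  | .var z => if z = x then .var y else .var z
  | .con c => .con c
  | .app f ts => .app f (ts.attach.map fun t => t.1.substT y x)


decreasing_by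
  have := List.sizeOf_lt_of_mem t.2
  simp only [Tm.app.sizeOf_spec]
  omega

/-- Variables occurring in a term. -/
def Tm.fvT : Tm S → List S.Var
  | .var z => [z]
  | .con _ => []
  | .app _ ts => ts.attach.flatMap fun t => t.1.fvT


decreasing_by
  have := List.sizeOf_lt_of_mem t.2
  simp only [Tm.app.sizeOf_spec]
  omega

/-- Substitution of variable `y` for free occurrences of variable `x` in a formula. -/
def Fm.substF (y x : S.Var) : Fm S → Fm S
  | .rel P ts => .rel P (ts.map (Tm.substT y x))
  | .eq t s => .eq (t.substT y x) (s.substT y x)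
  | .neg φ => .neg (φ.substF y x)
  | .and φ ψ => .and (φ.substF y x) (ψ.substF y x)
  | .all z φ => if z = x then .all z φ else .all z (φ.substF y x)
  | .know t φ => .know (t.substT y x) (φ.substF y x)

/-- Free variables of a formula. -/
def Fm.fvF : Fm S → List S.Var
  | .rel _ ts => ts.flatMap Tm.fvT
  | .eq t s => t.fvT ++ s.fvT
  | .neg φ => φ.fvF
  | .and φ ψ => φ.fvF ++ ψ.fvF
  | .all z φ => φ.fvF.filter (· ≠ z)
  | .know t φ => t.fvT ++ φ.fvF

/-- Bound (binder) variables of a formula. -/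
def Fm.bvF : Fm S → List S.Var
  | .rel _ _ => []
  | .eq _ _ => []
  | .neg φ => φ.bvF
  | .and φ ψ => φ.bvF ++ ψ.bvF
  | .all z φ => z :: φ.bvF
  | .know _ φ => φ.bvF

/-- Defined connectives. -/
def Fm.imp (φ ψ : Fm S) : Fm S := .neg (.and φ (.neg ψ))
def Fm.ex (x : S.Var) (φ : Fm S) : Fm S := .neg (.all x (.neg φ))
def Fm.neq (t s : Tm S) : Fm S := .neg (.eq t s)

/-- The diagonal (interpretation of equality) over a domain. -/
def diag (D : Type) : Set (List D) := {l | ∃ d : D, l = [d, d]}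

/-- A non-standard model: the interpretation of constants and function symbols
depends additionally on a parameter set `X ⊆ D^n` (encoded as a set of lists),
intended to be the extension of the relation symbol they occur under. -/
structure NSModel (S : Sig) where
  D : Type
  W : Type
  hW : Nonempty W
  sortOf : D → TMSort
  hAgt : ∃ d, sortOf d = TMSort.agt
  hObj : ∃ d, sortOf d = TMSort.obj
  R : D → W → W → Prop
  Jc : S.Con → W → Set (List D) → D
  hJc : ∀ c w X, sortOf (Jc c w X) = S.conSort c
  Jf : S.Fn → W → Set (List D) → List D → D
  JP : S.Rel → W → Set (List D)

/-- Extension of a term in a non-standard model, relative to world `w`,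
parameter set `X` and valuation `v`. -/
def NSModel.extT (N : NSModel S) (w : N.W) (X : Set (List N.D)) (v : S.Var → N.D) :
    Tm S → N.D
  | .var x => v x
  | .con c => N.Jc c w X
  | .app f ts => N.Jf f w X (ts.attach.map fun t => N.extT w X v t.1)


decreasing_by
  have := List.sizeOf_lt_of_mem t.2
  simp only [Tm.app.sizeOf_spec]
  omega

/-- Satisfaction in a non-standard model. -/
def NSModel.Sat (N : NSModel S) : N.W → (S.Var → N.D) → Fm S → Prop
  | w, v, .rel P ts => (ts.map fun t => N.extT w (N.JP P w) v t) ∈ N.JP P w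
  | w, v, .eq t s => N.extT w (diag N.D) v t = N.extT w (diag N.D) v s
  | w, v, .neg φ => ¬ N.Sat w v φ
  | w, v, .and φ ψ => N.Sat w v φ ∧ N.Sat w v ψ
  | w, v, .all x φ => ∀ d : N.D, N.sortOf d = S.varSort x → N.Sat w (Function.update v x d) φ
  | w, v, .know t φ => ∀ w' : N.W, N.R (N.extT w ∅ v t) w w' → N.Sat w' v φ

/-- A valuation respecting the sorts of variables. -/
def NSModel.GoodVal (N : NSModel S) (v : S.Var → N.D) : Prop :=
  ∀ x : S.Var, N.sortOf (v x) = S.varSort x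

/-- Validity in the non-standard semantics. -/
def NSValid (φ : Fm S) : Prop :=
  ∀ (N : NSModel S) (w : N.W) (v : S.Var → N.D), N.GoodVal v → N.Sat w v φ

/-- A standard (TML) model: constants and function symbols are interpreted
world-relatively (non-rigidly), over a constant domain. -/
structure TMLModel (S : Sig) where
  D : Type
  W : Type
  hW : Nonempty W
  sortOf : D → TMSort
  hAgt : ∃ d, sortOf d = TMSort.agt
  hObj : ∃ d, sortOf d = TMSort.obj
  R : D → W → W → Prop
  Ic : S.Con → W → D
  hIc : ∀ c w, sortOf (Ic c w) = S.conSort c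
  If : S.Fn → W → List D → D
  IP : S.Rel → W → Set (List D)

/-- Extension of a term in a TML model. -/
def TMLModel.extT (M : TMLModel S) (w : M.W) (v : S.Var → M.D) : Tm S → M.D
  | .var x => v x
  | .con c => M.Ic c w
  | .app f ts => M.If f w (ts.attach.map fun t => M.extT w v t.1)


decreasing_by
  have := List.sizeOf_lt_of_mem t.2
  simp only [Tm.app.sizeOf_spec]
  omega

/-- Satisfaction in a TML model. -/
def TMLModel.Sat (M : TMLModel S) : M.W → (S.Var → M.D) → Fm S → Prop
  | w, v, .rel P ts => (ts.map fun t => M.extT w v t) ∈ M.IP P w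
  | w, v, .eq t s => M.extT w v t = M.extT w v s
  | w, v, .neg φ => ¬ M.Sat w v φ
  | w, v, .and φ ψ => M.Sat w v φ ∧ M.Sat w v ψ
  | w, v, .all x φ => ∀ d : M.D, M.sortOf d = S.varSort x → M.Sat w (Function.update v x d) φ
  | w, v, .know t φ => ∀ w' : M.W, M.R (M.extT w v t) w w' → M.Sat w' v φ

def TMLModel.GoodVal (M : TMLModel S) (v : S.Var → M.D) : Prop :=
  ∀ x : S.Var, M.sortOf (v x) = S.varSort x

/-- Validity over the class of all frames in the TML semantics. -/
def TMLValid (φ : Fm S) : Prop :=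
  ∀ (M : TMLModel S) (w : M.W) (v : S.Var → M.D), M.GoodVal v → M.Sat w v φ

/-- Propositional tautology: true under every Boolean valuation of formulas
that respects negation and conjunction. -/
def Taut (φ : Fm S) : Prop :=
  ∀ b : Fm S → Prop, (∀ ψ : Fm S, b ψ.neg ↔ ¬ b ψ) →
    (∀ ψ χ : Fm S, b (ψ.and χ) ↔ b ψ ∧ b χ) → b φ

/-- The Hilbert-style system H⊢K of Liberman et al. -/
inductive Prov : Fm S → Prop
  | taut {φ : Fm S} : Taut φ → Prov φ
  | ui {x y : S.Var} {φ : Fm S} :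
      S.varSort x = S.varSort y → y ∉ φ.bvF →
      Prov (Fm.imp (.all x φ) (φ.substF y x))
  | id {t : Tm S} : Prov (.eq t t)
  | ps {x y z : S.Var} {φ : Fm S} :
      S.varSort x = S.varSort z → S.varSort y = S.varSort z →
      x ∉ φ.bvF → y ∉ φ.bvF →
      Prov (Fm.imp (.eq (.var x) (.var y)) (Fm.imp (φ.substF x z) (φ.substF y z)))
  | eid {c : S.Con} {x : S.Var} :
      S.varSort x = S.conSort c →
      Prov (Fm.imp (.eq (.con c) (.con c)) (Fm.ex x (.eq (.var x) (.con c))))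
  | dd {x y : S.Var} :
      S.varSort x ≠ S.varSort y → Prov (Fm.neq (.var x) (.var y))
  | axK {t : Tm S} {φ ψ : Fm S} :
      Prov (Fm.imp (.know t (Fm.imp φ ψ)) (Fm.imp (.know t φ) (.know t ψ)))
  | barcan {t : Tm S} {x : S.Var} {φ : Fm S} :
      x ∉ t.fvT → Prov (Fm.imp (.all x (.know t φ)) (.know t (.all x φ)))
  | kni {t : Tm S} {x y : S.Var} :
      Prov (Fm.imp (Fm.neq (.var x) (.var y)) (.know t (Fm.neq (.var x) (.var y))))
  | mp {φ ψ : Fm S} : Prov (Fm.imp φ ψ) → Prov φ → Prov ψ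
  | nec {t : Tm S} {φ : Fm S} : Prov φ → Prov (.know t φ)
  | ug {x : S.Var} {φ ψ : Fm S} :
      x ∉ φ.fvF → Prov (Fm.imp φ ψ) → Prov (Fm.imp φ (.all x ψ))


lemma map_attach_eq {α β} (l : List α) (f : α → β) :
    l.attach.map (fun t => f t.1) = l.map f := by
  simp

lemma extT_subst {S : Sig} (x y z : S.Var) (N : NSModel S) (w : N.W)
    (X : Set (List N.D)) (v : S.Var → N.D) (hv : v x = v y) :
    ∀ t : Tm S, N.extT w X v (t.substT x z) = N.extT w X v (t.substT y z)
  | .var a => by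
    by_cases h : a = z <;> simp [Tm.substT, h, NSModel.extT, hv]
  | .con c => by simp [Tm.substT]
  | .app f ts => by
    simp only [Tm.substT, NSModel.extT]
    congr 1
    simp only [map_attach_eq, List.map_map, Function.comp_def]
    exact List.map_congr_left fun t _ => extT_subst x y z N w X v hv t


lemma sat_subst {S : Sig} (x y z : S.Var) (N : NSModel S) :
    ∀ (φ : Fm S), x ∉ φ.bvF → y ∉ φ.bvF → ∀ (w : N.W) (v : S.Var → N.D), v x = v y →
      (N.Sat w v (φ.substF x z) ↔ N.Sat w v (φ.substF y z)) := by
  intro φ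
  induction φ with
  | rel P ts =>
    intro _ _ w v hv
    simp only [Fm.substF, NSModel.Sat, List.map_map, Function.comp_def]
    rw [List.map_congr_left fun t (_ : t ∈ ts) => extT_subst x y z N w (N.JP P w) v hv t]
  | eq t s =>
    intro _ _ w v hv
    simp only [Fm.substF, NSModel.Sat,
      extT_subst x y z N w (diag N.D) v hv t, extT_subst x y z N w (diag N.D) v hv s]
  | neg φ ih =>
    intro hx hy w v hv
    simp only [Fm.substF, NSModel.Sat]
    exact not_congr (ih hx hy w v hv)
  | and φ ψ ih1 ih2 =>
    intro hx hy w v hv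
    simp only [Fm.bvF, List.mem_append] at hx hy
    push_neg at hx hy
    simp only [Fm.substF, NSModel.Sat]
    exact and_congr (ih1 hx.1 hy.1 w v hv) (ih2 hx.2 hy.2 w v hv)
  | all a φ ih =>
    intro hx hy w v hv
    simp only [Fm.bvF, List.mem_cons] at hx hy
    push_neg at hx hy
    have hax : a ≠ x := fun h => hx.1 h.symm
    have hay : a ≠ y := fun h => hy.1 h.symm
    by_cases haz : a = z
    · simp [Fm.substF, haz]
    simp only [Fm.substF, if_neg haz, NSModel.Sat]
    refine forall_congr' fun d => imp_congr_right fun _ => ?_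
    exact ih hx.2 hy.2 w (Function.update v a d)
      (by rw [Function.update_of_ne (Ne.symm hax), Function.update_of_ne (Ne.symm hay)]; exact hv)
  | know t φ ih =>
    intro hx hy w v hv
    simp only [Fm.substF, NSModel.Sat, extT_subst x y z N w ∅ v hv t]
    exact forall_congr' fun w' => imp_congr_right fun _ => ih hx hy w' v hv

/-- the variable-restricted substitution-of-equals axiom
`x = y → (φ(x/z) → φ(y/z))` is valid in the non-standard semantics. -/
theorem stmt5 (S : Sig) (x y z : S.Var)
    (hxz : S.varSort x = S.varSort z) (hyz : S.varSort y = S.varSort z)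
    (φ : Fm S) (hx : x ∉ φ.bvF) (hy : y ∉ φ.bvF) :
    NSValid (Fm.imp (.eq (.var x) (.var y))
      (Fm.imp (φ.substF x z) (φ.substF y z))) := by
  intro N w v _
  simp only [Fm.imp, NSModel.Sat, not_and, not_not]
  intro heq hsat
  have hv : v x = v y := by simpa [NSModel.extT] using heq
  exact (sat_subst x y z N φ hx hy w v hv).mp hsat
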